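/- Monotonicity of the trace norm under trace-preserving positive maps in the hypothesis-testing form: if T : A → B is a positive trace-preserving linear map such that T* is subunital, then for all density operators σ, ρ ∈ A and t ≥ 0, ‖T(σ) − t T(ρ)‖₁ ≤ ‖σ − tρ‖₁. -/

import Mathlib

/-!
Write `‖h‖₁ = 2 Tr h⁺ - Tr h`. Trace preservation fixes `Tr`, so it suffices to show
`Tr (T x)⁺ ≤ Tr x⁺`. With `P` the spectral projection of `T x` onto its positive eigenvalues,
`Tr (T x)⁺ = Tr (T(x) P) = Tr (T(x⁺) P) - Tr (T(x⁻) P) ≤ Tr (T(x⁺) P) ≤ Tr T(x⁺) = Tr x⁺`,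
using positivity of `T` and `0 ≤ P ≤ 1`.
-/

open Matrix ComplexOrder

namespace Matrix

open scoped MatrixOrder

variable {k : Type*} [Fintype k] [DecidableEq k]

lemma IsHermitian.trace_cfc {A : Matrix k k ℂ} (hA : A.IsHermitian) (f : ℝ → ℝ) :
    (cfc f A).trace = ∑ i, (f (hA.eigenvalues i) : ℂ) := by
  rw [hA.cfc_eq, IsHermitian.cfc, Unitary.conjStarAlgAut_apply, trace_mul_cycle,
    Unitary.coe_star_mul_self, one_mul, trace_diagonal]
  rfl

lemma trace_mul_nonneg {A B : Matrix k k ℂ} (hA : 0 ≤ A) (hB : 0 ≤ B) : 0 ≤ (A * B).trace := by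
  obtain ⟨C, rfl⟩ := CStarAlgebra.nonneg_iff_eq_star_mul_self.mp hA
  rw [mul_assoc, trace_mul_comm]
  exact ((nonneg_iff_posSemidef.mp hB).mul_mul_conjTranspose_same C).trace_nonneg

lemma trace_mul_le_trace {A M : Matrix k k ℂ} (hA : 0 ≤ A) (hM : M ≤ 1) :
    (A * M).trace ≤ A.trace := by
  have := trace_mul_nonneg hA (sub_nonneg.mpr hM)
  rwa [mul_sub, mul_one, trace_sub, sub_nonneg] at this

lemma trace_sub_mul_le {A B M : Matrix k k ℂ} (hA : 0 ≤ A) (hB : 0 ≤ B) (hM₀ : 0 ≤ M)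
    (hM₁ : M ≤ 1) : ((A - B) * M).trace ≤ A.trace :=
  calc ((A - B) * M).trace = (A * M).trace - (B * M).trace := by rw [sub_mul, trace_sub]
    _ ≤ (A * M).trace := sub_le_self _ (trace_mul_nonneg hB hM₀)
    _ ≤ A.trace := trace_mul_le_trace hA hM₁

lemma IsHermitian.trace_posPart {A : Matrix k k ℂ} (hA : A.IsHermitian) :
    (A⁺).trace = ∑ i, (((hA.eigenvalues i)⁺ : ℝ) : ℂ) := by
  rw [CFC.posPart_def, cfcₙ_eq_cfc, hA.trace_cfc]

lemma IsHermitian.exists_trace_mul_eq_sum_posPart {A : Matrix k k ℂ} (hA : A.IsHermitian) :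
    ∃ P : Matrix k k ℂ, 0 ≤ P ∧ P ≤ 1 ∧ (A * P).trace = ∑ i, (((hA.eigenvalues i)⁺ : ℝ) : ℂ) := by
  let e : ℝ → ℝ := fun r => if 0 < r then 1 else 0
  have he : ContinuousOn e (spectrum ℝ A) := A.finite_real_spectrum.continuousOn _
  refine ⟨cfc e A, cfc_nonneg fun r _ => by positivity, cfc_le_one _ _ fun r _ => by
    dsimp [e]; split_ifs <;> norm_num, ?_⟩
  have hmul : A * cfc e A = cfc (fun r : ℝ => r⁺) A := by
    nth_rw 1 [← cfc_id' ℝ A]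
    rw [← cfc_mul (fun r => r) e A]
    refine cfc_congr fun r _ => ?_
    dsimp [e]
    split_ifs with h
    · simp [h.le]
    · simp [not_lt.mp h]
  rw [hmul, hA.trace_cfc]

lemma IsHermitian.sum_abs_eigenvalues {A : Matrix k k ℂ} (hA : A.IsHermitian) :
    ∑ i, |hA.eigenvalues i| = 2 * ∑ i, (hA.eigenvalues i)⁺ - ∑ i, hA.eigenvalues i := by
  rw [Finset.mul_sum, ← Finset.sum_sub_distrib]
  refine Finset.sum_congr rfl fun i _ => ?_
  linarith [posPart_add_negPart (hA.eigenvalues i), posPart_sub_negPart (hA.eigenvalues i)]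

theorem sum_abs_eigenvalues_map_le {n m : Type*} [Fintype n] [DecidableEq n] [Fintype m]
    [DecidableEq m] (T : Matrix n n ℂ →ₗ[ℂ] Matrix m m ℂ)
    (hpos : ∀ a : Matrix n n ℂ, a.PosSemidef → (T a).PosSemidef)
    (htp : ∀ a : Matrix n n ℂ, (T a).trace = a.trace)
    {x : Matrix n n ℂ} {y : Matrix m m ℂ} (hx : x.IsHermitian) (hy : y.IsHermitian)
    (hTx : T x = y) :
    ∑ i, |hy.eigenvalues i| ≤ ∑ i, |hx.eigenvalues i| := by
  have hT : ∀ a, 0 ≤ a → 0 ≤ T a := fun a ha =>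
    nonneg_iff_posSemidef.mpr (hpos a (nonneg_iff_posSemidef.mp ha))
  obtain ⟨P, hP₀, hP₁, hyP⟩ := hy.exists_trace_mul_eq_sum_posPart
  have hposPart : ∑ i, (hy.eigenvalues i)⁺ ≤ ∑ i, (hx.eigenvalues i)⁺ := by
    have key : (y * P).trace ≤ (x⁺).trace :=
      calc (y * P).trace = ((T x⁺ - T x⁻) * P).trace := by
            rw [← map_sub, CFC.posPart_sub_negPart x hx.isSelfAdjoint, hTx]
        _ ≤ (T x⁺).trace :=
            trace_sub_mul_le (hT _ (CFC.posPart_nonneg x)) (hT _ (CFC.negPart_nonneg x)) hP₀ hP₁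
        _ = (x⁺).trace := htp _
    rw [hyP, hx.trace_posPart] at key
    exact_mod_cast key
  have htrace : ∑ i, hy.eigenvalues i = ∑ i, hx.eigenvalues i := by
    have := htp x
    rw [hTx, hy.trace_eq_sum_eigenvalues, hx.trace_eq_sum_eigenvalues] at this
    exact_mod_cast this
  rw [hx.sum_abs_eigenvalues, hy.sum_abs_eigenvalues]
  linarith

end Matrix

theorem stmt18_general {n m : Type*} [Fintype n] [DecidableEq n] [Fintype m] [DecidableEq m]
    (T : Matrix n n ℂ →ₗ[ℂ] Matrix m m ℂ)
    (hpos : ∀ a : Matrix n n ℂ, a.PosSemidef → (T a).PosSemidef)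
    (htp : ∀ a : Matrix n n ℂ, (T a).trace = a.trace)
    (σ ρ : Matrix n n ℂ) (t : ℝ)
    (hx : (σ - (t : ℂ) • ρ).IsHermitian)
    (hy : (T σ - (t : ℂ) • T ρ).IsHermitian) :
    ∑ i, |hy.eigenvalues i| ≤ ∑ i, |hx.eigenvalues i| :=
  sum_abs_eigenvalues_map_le T hpos htp hx hy (by rw [map_sub, map_smul])

/-- Monotonicity of the trace norm under positive trace-preserving
maps with subunital adjoint: for density operators `σ, ρ` and `t ≥ 0`,
`‖T σ - t • T ρ‖₁ ≤ ‖σ - t • ρ‖₁`, where the trace norm of a Hermitian matrix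
is the sum of the absolute values of its eigenvalues. -/
theorem stmt18 {n m : Type*} [Fintype n] [DecidableEq n] [Fintype m] [DecidableEq m]
    (T : Matrix n n ℂ →ₗ[ℂ] Matrix m m ℂ) (Tstar : Matrix m m ℂ →ₗ[ℂ] Matrix n n ℂ)
    (hpos : ∀ a : Matrix n n ℂ, a.PosSemidef → (T a).PosSemidef)
    (hadj : ∀ (a : Matrix n n ℂ) (b : Matrix m m ℂ),
      ((T a)ᴴ * b).trace = (aᴴ * Tstar b).trace)
    (hsub : ((1 : Matrix n n ℂ) - Tstar 1).PosSemidef)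
    (htp : ∀ a : Matrix n n ℂ, (T a).trace = a.trace)
    (σ ρ : Matrix n n ℂ) (hσ : σ.PosSemidef) (hσ1 : σ.trace = 1)
    (hρ : ρ.PosSemidef) (hρ1 : ρ.trace = 1)
    (t : ℝ) (ht : 0 ≤ t)
    (hx : (σ - (t : ℂ) • ρ).IsHermitian)
    (hy : (T σ - (t : ℂ) • T ρ).IsHermitian) :
    ∑ i, |hy.eigenvalues i| ≤ ∑ i, |hx.eigenvalues i| :=
  stmt18_general T hpos htp σ ρ t hx hy
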